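/- Soundness of STL robustness (discrete-time, finite formulas): for any discrete-time signal s : ℕ → ℝⁿ, time t, and STL formula φ built from predicates μ ≥ 0, negation, conjunction, and bounded until over finite integer intervals, if ρ(s,t,φ) > 0 then s,t ⊨ φ, and if ρ(s,t,φ) < 0 then s,t ⊭ φ. -/

import Mathlib

inductive STL (α : Type) : Type where
  | tru : STL α
  | atom : (α → ℝ) → STL α
  | not : STL α → STL α
  | and : STL α → STL α → STL α
  | untl : ℕ → ℕ → STL α → STL α → STL α

noncomputable def robust {α : Type} (s : ℕ → α) : STL α → ℕ → ℝ
  | .tru, _ => 1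
  | .atom μ, t => μ (s t)
  | .not φ, t => -(robust s φ t)
  | .and φ ψ, t => min (robust s φ t) (robust s ψ t)
  | .untl a b φ ψ, t =>
      sSup ((fun t' => min (robust s ψ t')
        (sInf ((fun t'' => robust s φ t'') '' Set.Icc t t'))) '' Set.Icc (t + a) (t + b))

def sat {α : Type} (s : ℕ → α) : STL α → ℕ → Prop
  | .tru, _ => True
  | .atom μ, t => 0 < μ (s t)
  | .not φ, t => ¬ sat s φ t
  | .and φ ψ, t => sat s φ t ∧ sat s ψ t
  | .untl a b φ ψ, t =>
      ∃ t' ∈ Set.Icc (t + a) (t + b), sat s ψ t' ∧ ∀ t'' ∈ Set.Icc t t', sat s φ t''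

/-!
Induction on the formula, proving for each `φ` both `0 < ρ → s, t ⊨ φ` and `s, t ⊨ φ → 0 ≤ ρ`;
the second is the contrapositive of the claim for `ρ < 0`, and the pair is closed under negation.
For bounded until, a positive `max` is attained at some `t'` where both `ρ(ψ)` and the
`min` of `ρ(φ)` over `[t, t']` are positive; conversely a satisfying witness `t'` makes the
corresponding term of the `max` nonnegative.
-/

open Set

variable {α : Type} (s : ℕ → α)

lemma robust_untl_le {a b : ℕ} {φ ψ : STL α} {t t' : ℕ} (ht' : t' ∈ Icc (t + a) (t + b)) :
    min (robust s ψ t') (sInf ((fun t'' => robust s φ t'') '' Icc t t')) ≤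
      robust s (.untl a b φ ψ) t :=
  le_csSup ((finite_Icc _ _).image _).bddAbove (mem_image_of_mem _ ht')

lemma exists_robust_pos_of_robust_untl_pos {a b : ℕ} {φ ψ : STL α} {t : ℕ}
    (h : 0 < robust s (.untl a b φ ψ) t) :
    ∃ t' ∈ Icc (t + a) (t + b), 0 < robust s ψ t' ∧ ∀ t'' ∈ Icc t t', 0 < robust s φ t'' := by
  obtain ⟨t', ht', hpos⟩ : ∃ t' ∈ Icc (t + a) (t + b),
      0 < min (robust s ψ t') (sInf ((fun t'' => robust s φ t'') '' Icc t t')) := by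
    by_contra! hle
    exact h.not_ge (Real.sSup_nonpos (forall_mem_image.2 hle))
  rw [lt_min_iff] at hpos
  refine ⟨t', ht', hpos.1, fun t'' ht'' => hpos.2.trans_le ?_⟩
  exact csInf_le ((finite_Icc _ _).image _).bddBelow (mem_image_of_mem _ ht'')

lemma robust_untl_nonneg {a b : ℕ} {φ ψ : STL α} {t t' : ℕ} (ht' : t' ∈ Icc (t + a) (t + b))
    (hψ : 0 ≤ robust s ψ t') (hφ : ∀ t'' ∈ Icc t t', 0 ≤ robust s φ t'') :
    0 ≤ robust s (.untl a b φ ψ) t :=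
  (le_min hψ (Real.sInf_nonneg (forall_mem_image.2 hφ))).trans (robust_untl_le s ht')

theorem sat_of_robust_pos_and_robust_nonneg_of_sat (φ : STL α) (t : ℕ) :
    (0 < robust s φ t → sat s φ t) ∧ (sat s φ t → 0 ≤ robust s φ t) := by
  induction φ generalizing t with
  | tru => simp [robust, sat]
  | atom μ => exact ⟨id, le_of_lt⟩
  | not φ ih =>
    simp only [robust, sat, neg_pos, neg_nonneg]
    exact ⟨fun h hsat => ((ih t).2 hsat).not_gt h, fun hnsat => not_lt.1 (mt (ih t).1 hnsat)⟩
  | and φ ψ ihφ ihψ =>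
    simp only [robust, sat, lt_min_iff, le_min_iff]
    exact ⟨fun h => ⟨(ihφ t).1 h.1, (ihψ t).1 h.2⟩, fun h => ⟨(ihφ t).2 h.1, (ihψ t).2 h.2⟩⟩
  | untl a b φ ψ ihφ ihψ =>
    constructor
    · intro h
      obtain ⟨t', ht', hψ, hφ⟩ := exists_robust_pos_of_robust_untl_pos s h
      exact ⟨t', ht', (ihψ t').1 hψ, fun t'' ht'' => (ihφ t'').1 (hφ t'' ht'')⟩
    · rintro ⟨t', ht', hψ, hφ⟩
      exact robust_untl_nonneg s ht' ((ihψ t').2 hψ) fun t'' ht'' => (ihφ t'').2 (hφ t'' ht'')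

theorem robust_soundness (n : ℕ) (s : ℕ → (Fin n → ℝ)) (t : ℕ)
    (φ : STL (Fin n → ℝ)) :
    (0 < robust s φ t → sat s φ t) ∧ (robust s φ t < 0 → ¬ sat s φ t) := by
  obtain ⟨hpos, hsat⟩ := sat_of_robust_pos_and_robust_nonneg_of_sat s φ t
  exact ⟨hpos, fun hneg h => (hsat h).not_gt hneg⟩
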